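/- For a reduced undirected edge-weighted s-t graph G with nonnegative edge weights, a set of edges is a minimum-weight tracking edge set if and only if it is a minimum-weight feedback edge set; consequently the complement of a maximum-weight spanning tree is a minimum-weight tracking edge set. -/

import Mathlib

/-!
If `G - T` contains a cycle `C`, take an `s`-`t` path through an edge of `C` and let `a` and `b` be
its first and last vertices on `C`. Replacing the segment from `a` to `b` by either of the two arcs
of `C` gives two distinct `s`-`t` paths with the same sequence of `T`-edges, so `T` is not tracking.

Conversely, let two `s`-`t` paths have the same sequence of `T`-edges. The edges lying on exactly
one of them avoid `T`, and every vertex meets an even number of them, since each path meets a vertex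
in an odd number of edges exactly when the vertex is `s` or `t`. A finite acyclic graph with an edge
has a leaf, so if `G - T` is acyclic there are no such edges, and a path is determined by its edges.

A feedback edge set `T` contains the complement of any spanning tree extending the forest `G - T`,
so for nonnegative weights the complement of a maximum-weight spanning tree is a lightest one.
-/

open SimpleGraph

noncomputable def etrackSeq {V : Type} (T : Set (Sym2 V)) (l : List (Sym2 V)) : List (Sym2 V) :=
  l.filter (fun e => @decide (e ∈ T) (Classical.propDecidable _))

/-- `T` is a tracking edge set for `G`: distinct `s`-`t` paths have distinct
sequences of `T`-edges along them. -/
def IsTrackingEdgeSet {V : Type} (G : SimpleGraph V) (s t : V) (T : Set (Sym2 V)) : Prop :=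
  ∀ p q : G.Walk s t, p.IsPath → q.IsPath →
    etrackSeq T p.edges = etrackSeq T q.edges → p = q

/-- `F` is a feedback edge set: deleting the edges of `F` makes `G` acyclic. -/
def IsFES {V : Type} (G : SimpleGraph V) (F : Set (Sym2 V)) : Prop :=
  (G.deleteEdges F).IsAcyclic

/-- Every vertex and every edge of `G` lies on some `s`-`t` path. -/
def Reduced {V : Type} (G : SimpleGraph V) (s t : V) : Prop :=
  (∀ v : V, ∃ p : G.Walk s t, p.IsPath ∧ v ∈ p.support) ∧
  (∀ e ∈ G.edgeSet, ∃ p : G.Walk s t, p.IsPath ∧ e ∈ p.edges)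

/-- Total weight of a set of edges. -/
noncomputable def eweight {V : Type} (w : Sym2 V → ℝ) (S : Set (Sym2 V)) : ℝ :=
  ∑ᶠ e ∈ S, w e

open scoped symmDiff

open Finset in
theorem Finset.even_card_symmDiff_iff {α : Type*} [DecidableEq α] (X Y : Finset α) :
    Even #(X ∆ Y) ↔ (Even #X ↔ Even #Y) := by
  rw [Finset.symmDiff_def, card_union_of_disjoint disjoint_sdiff_sdiff,
    ← card_sdiff_add_card_inter X Y, ← card_sdiff_add_card_inter Y X, inter_comm Y X]
  simp only [Nat.even_add]
  tauto

namespace SimpleGraph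

variable {V : Type*} {G : SimpleGraph V} {u v w : V}

namespace Walk

theorem IsPath.eq_of_edges_subset {p q : G.Walk u v} (hp : p.IsPath) (hq : q.IsPath)
    (h : p.edges ⊆ q.edges) : p = q := by
  induction p with
  | nil => exact (isPath_iff_nil.mp hq).eq_nil.symm
  | @cons u x v hux p ih =>
    cases q with
    | nil => exact absurd (isPath_iff_nil.mp hp) not_nil_cons
    | @cons _ y _ huy q =>
      obtain rfl : x = y := by simpa using hq.eq_snd_of_mem_edges (w := x) (h (by simp))
      have hp' := (cons_isPath_iff _ _).mp hp
      refine congrArg _ (ih hp'.1 ((cons_isPath_iff _ _).mp hq).1 fun e he => ?_)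
      have hne : e ≠ s(u, x) := fun hex => hp'.2 (p.fst_mem_support_of_mem_edges (hex ▸ he))
      simpa [hne] using h (List.mem_cons_of_mem _ he)

theorem IsPath.append {p : G.Walk u v} {q : G.Walk v w} (hp : p.IsPath) (hq : q.IsPath)
    (h : ∀ x ∈ p.support, x ∈ q.support → x = v) : (p.append q).IsPath := by
  rw [isPath_def, support_append, List.nodup_append']
  refine ⟨hp.support_nodup, hq.support_nodup.sublist q.support.tail_sublist, fun x hxp hxq => ?_⟩
  obtain rfl := h x hxp (List.mem_of_mem_tail hxq)
  exact (List.nodup_cons.mp (q.cons_tail_support ▸ hq.support_nodup)).1 hxq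

theorem IsPath.replace_middle {a b : V} {p₁ : G.Walk u a} {m ρ : G.Walk a b} {p₃ : G.Walk b v}
    {S : Set V} (hp : (p₁.append (m.append p₃)).IsPath) (hρ : ρ.IsPath)
    (hρS : ∀ x ∈ ρ.support, x ∈ S) (h₁ : ∀ x ∈ p₁.support, x ∈ S → x = a)
    (h₃ : ∀ x ∈ p₃.support, x ∈ S → x = b) : (p₁.append (ρ.append p₃)).IsPath := by
  refine hp.of_append_left.append
    (hρ.append hp.of_append_right.of_append_right fun x hx hx₃ => h₃ x hx₃ (hρS x hx))
    fun x hx₁ hx => ?_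
  rcases (mem_support_append_iff _ _).mp hx with hx | hx
  · exact h₁ x hx₁ (hρS x hx)
  · by_contra hxa
    exact hp.ne_of_mem_support_of_append hxa hx₁ ((mem_support_append_iff _ _).mpr (Or.inr hx)) rfl

theorem exists_eq_append_of_exists_mem_support (p : G.Walk u v) {S : Set V}
    (h : ∃ x ∈ p.support, x ∈ S) :
    ∃ a ∈ S, ∃ (q : G.Walk u a) (r : G.Walk a v), p = q.append r ∧
      ∀ x ∈ q.support, x ∈ S → x = a := by
  induction p with
  | nil => exact ⟨_, by simpa using h, nil, nil, rfl, by simp⟩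
  | @cons u x v hux p ih =>
    by_cases hu : u ∈ S
    · exact ⟨u, hu, nil, cons hux p, rfl, by simp⟩
    have hne : ∀ y ∈ S, y ≠ u := by rintro y hyS rfl; exact hu hyS
    obtain ⟨a, ha, q, r, rfl, hq⟩ := ih (by
      obtain ⟨y, hy, hyS⟩ := h
      exact ⟨y, (List.mem_cons.mp hy).resolve_left (hne y hyS), hyS⟩)
    exact ⟨a, ha, cons hux q, r, rfl, fun y hy hyS =>
      hq y ((List.mem_cons.mp hy).resolve_left (hne y hyS)) hyS⟩

theorem exists_eq_append_append_of_exists_mem_support (p : G.Walk u v) {S : Set V}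
    (h : ∃ x ∈ p.support, x ∈ S) :
    ∃ a ∈ S, ∃ b ∈ S, ∃ (p₁ : G.Walk u a) (m : G.Walk a b) (p₃ : G.Walk b v),
      p = p₁.append (m.append p₃) ∧ (∀ x ∈ p₁.support, x ∈ S → x = a) ∧
      ∀ x ∈ p₃.support, x ∈ S → x = b := by
  obtain ⟨a, ha, p₁, r, rfl, h₁⟩ := p.exists_eq_append_of_exists_mem_support h
  obtain ⟨b, hb, p₃, m, hr, h₃⟩ :=
    r.reverse.exists_eq_append_of_exists_mem_support ⟨a, by simp, ha⟩
  refine ⟨a, ha, b, hb, p₁, m.reverse, p₃.reverse, ?_, h₁, fun x hx => h₃ x (by simpa using hx)⟩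
  rw [← reverse_append, ← hr, reverse_reverse]

theorem IsCycle.exists_isPath_ne {c : G.Walk v v} (hc : c.IsCycle) {a b : V}
    (ha : a ∈ c.support) (hb : b ∈ c.support) (hab : a ≠ b) :
    ∃ ρ₁ ρ₂ : G.Walk a b, ρ₁.IsPath ∧ ρ₂.IsPath ∧ ρ₁.edges ≠ ρ₂.edges ∧
      ρ₁.support ⊆ c.support ∧ ρ₂.support ⊆ c.support ∧
      ρ₁.edges ⊆ c.edges ∧ ρ₂.edges ⊆ c.edges := by
  classical
  set c' := c.rotate a ha
  have hc' : c'.IsCycle := hc.rotate ha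
  have hb' : b ∈ c'.support := (mem_support_rotate_iff ..).mpr hb
  have hsupp : c'.support ⊆ c.support := fun x => (mem_support_rotate_iff ..).mp
  have hedges : c'.edges ⊆ c.edges := fun e => (c.rotate_edges a ha).perm.mem_iff.mp
  refine ⟨c'.takeUntil b hb', (c'.dropUntil b hb').reverse, hc'.isPath_takeUntil hb',
    (IsCycle.isPath_of_append_right (not_nil_of_ne hab) (by rwa [c'.take_spec hb'])).reverse,
    fun heq => ?_, fun x hx => hsupp (c'.support_takeUntil_subset_support hb' hx), ?_,
    fun e he => hedges (c'.edges_takeUntil_subset_edges hb' he), ?_⟩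
  · obtain ⟨e, he⟩ := List.exists_mem_of_ne_nil _
      (edges_eq_nil.not.mpr (not_nil_of_ne hab.symm) : (c'.dropUntil b hb').edges ≠ [])
    exact hc'.isTrail.disjoint_edges_takeUntil_dropUntil hb' (by simpa [heq] using he) he
  · exact fun x hx => hsupp (c'.support_dropUntil_subset_support hb' (by simpa using hx))
  · exact fun e he => hedges (c'.edges_dropUntil_subset_edges hb' (by simpa using he))

open Finset in
theorem IsTrail.card_filter_mem_edges [DecidableEq V] {p : G.Walk u v} (hp : p.IsTrail) (x : V) :
    #(p.edges.toFinset.filter (x ∈ ·)) = p.edges.countP (x ∈ ·) := by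
  rw [List.countP_eq_length_filter, ← List.toFinset_card_of_nodup (hp.edges_nodup.filter _)]
  congr 1
  ext
  simp

open Finset in
theorem IsTrail.even_degree_fromEdgeSet_symmDiff [Fintype V] [DecidableEq V]
    {p q : G.Walk u v} (hp : p.IsTrail) (hq : q.IsTrail) (x : V) :
    Even ((fromEdgeSet ↑(p.edges.toFinset ∆ q.edges.toFinset)).degree x) := by
  have hdiag (e : Sym2 V) : e ∈ p.edges ∨ e ∈ q.edges → ¬e.IsDiag := by
    rintro (he | he) <;> exact G.not_isDiag_of_mem_edgeSet (edges_subset_edgeSet _ he)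
  rw [← card_incidenceFinset_eq_degree, incidenceFinset_eq_filter]
  convert (even_card_symmDiff_iff (p.edges.toFinset.filter (x ∈ ·))
    (q.edges.toFinset.filter (x ∈ ·))).mpr ?_ using 2
  · ext e
    simp only [mem_filter, Finset.mem_symmDiff, mem_edgeFinset, edgeSet_fromEdgeSet,
      Set.mem_sdiff, Finset.mem_coe, List.mem_toFinset]
    have := hdiag e
    tauto
  · rw [hp.card_filter_mem_edges, hq.card_filter_mem_edges, hp.even_countP_edges_iff,
      hq.even_countP_edges_iff]

end Walk

theorem IsAcyclic.exists_degree_eq_one [Fintype V] [DecidableRel G.Adj] (hG : G.IsAcyclic)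
    (hne : G ≠ ⊥) : ∃ v, G.degree v = 1 := by
  obtain ⟨x, y, hxy⟩ : ∃ x y, G.Adj x y := by
    by_contra! h
    exact hne (eq_bot_iff_forall_not_adj.mpr h)
  have : Nonempty V := ⟨x⟩
  obtain ⟨u, v, p, hp, hmax⟩ := Walk.exists_isPath_forall_isPath_length_le_length G
  have hnil : ¬p.Nil := fun h => by
    simpa [Walk.length_eq_zero_iff.mpr h] using hmax _ _ _ hxy.isPath_toWalk
  refine ⟨u, degree_eq_one_iff_existsUnique_adj.mpr ⟨p.snd, p.adj_snd hnil, fun w hw => ?_⟩⟩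
  refine hG.eq_snd_of_adj_start hp hw (by_contra fun hwp => ?_)
  simpa using hmax _ _ _ (hp.cons hwp (h := hw.symm))

end SimpleGraph

section

variable {V : Type} {G : SimpleGraph V} {s t : V} {T : Set (Sym2 V)}

theorem mem_etrackSeq {l : List (Sym2 V)} {e : Sym2 V} : e ∈ etrackSeq T l ↔ e ∈ l ∧ e ∈ T := by
  simp [etrackSeq]

theorem etrackSeq_append (l₁ l₂ : List (Sym2 V)) :
    etrackSeq T (l₁ ++ l₂) = etrackSeq T l₁ ++ etrackSeq T l₂ :=
  List.filter_append ..

theorem etrackSeq_eq_nil {l : List (Sym2 V)} (h : ∀ e ∈ l, e ∉ T) : etrackSeq T l = [] :=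
  List.filter_eq_nil_iff.mpr fun e he => by simpa using h e he

theorem IsFES.isTrackingEdgeSet [Fintype V] (hT : IsFES G T) : IsTrackingEdgeSet G s t T := by
  classical
  intro p q hp hq hseq
  have hpq : ∀ e ∈ T, e ∈ p.edges ↔ e ∈ q.edges := fun e he => by
    simpa [mem_etrackSeq, he] using congrArg (e ∈ ·) hseq
  set D : SimpleGraph V := fromEdgeSet ↑(p.edges.toFinset ∆ q.edges.toFinset)
  have hDT : D ≤ G.deleteEdges T := by
    intro x y hxy
    simp only [D, fromEdgeSet_adj, Finset.coe_symmDiff, Set.mem_symmDiff, Finset.mem_coe,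
      List.mem_toFinset] at hxy
    rw [deleteEdges_adj]
    obtain ⟨hxy | hxy, -⟩ := hxy
    · exact ⟨p.adj_of_mem_edges hxy.1, fun h => hxy.2 ((hpq _ h).mp hxy.1)⟩
    · exact ⟨q.adj_of_mem_edges hxy.1, fun h => hxy.2 ((hpq _ h).mpr hxy.1)⟩
  have hD : D = ⊥ := by
    by_contra hne
    obtain ⟨x, hx⟩ := (hT.anti hDT).exists_degree_eq_one hne
    have := hp.isTrail.even_degree_fromEdgeSet_symmDiff hq.isTrail x
    rw [hx] at this
    exact Nat.not_even_one this
  refine hp.eq_of_edges_subset hq fun e he => by_contra fun heq => ?_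
  have : e ∈ D.edgeSet := by
    rw [edgeSet_fromEdgeSet]
    exact ⟨by simp [Set.mem_symmDiff, he, heq],
      G.not_isDiag_of_mem_edgeSet (p.edges_subset_edgeSet he)⟩
  simp [hD] at this

theorem Reduced.isFES_of_isTrackingEdgeSet (hred : Reduced G s t)
    (hT : IsTrackingEdgeSet G s t T) : IsFES G T := by
  intro v c' hc'
  set c := c'.mapLe (G.deleteEdges_le T)
  have hc : c.IsCycle := (Walk.isCycle_mapLe _).mpr hc'
  have hcT : ∀ e ∈ c.edges, e ∉ T := fun e he => by
    have := c'.edges_subset_edgeSet (c'.edges_mapLe_eq_edges _ ▸ he)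
    rw [edgeSet_deleteEdges] at this
    exact this.2
  have he := Walk.mk_start_snd_mem_edges hc.not_nil
  obtain ⟨P, hP, heP⟩ := hred.2 _ (c.edges_subset_edgeSet he)
  obtain ⟨a, ha, b, hb, P₁, M, P₃, rfl, h₁, h₃⟩ :=
    P.exists_eq_append_append_of_exists_mem_support (S := {x | x ∈ c.support})
      ⟨_, P.fst_mem_support_of_mem_edges heP, c.fst_mem_support_of_mem_edges he⟩
  have hab : a ≠ b := by
    rintro rfl
    have hM : M.Nil := Walk.isPath_iff_nil.mp hP.of_append_right.of_append_left
    have hPc : ∀ x ∈ (P₁.append (M.append P₃)).support, x ∈ c.support → x = a := by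
      intro x hx hxc
      rw [Walk.mem_support_append_iff, Walk.mem_support_append_iff,
        Walk.nil_iff_support_eq.mp hM, List.mem_singleton] at hx
      rcases hx with hx | hx | hx
      · exact h₁ x hx hxc
      · exact hx
      · exact h₃ x hx hxc
    exact (c.adj_snd hc.not_nil).ne <|
      (hPc _ (Walk.fst_mem_support_of_mem_edges _ heP) c.start_mem_support).trans
        (hPc _ (Walk.snd_mem_support_of_mem_edges _ heP) (c.snd_mem_support_of_mem_edges he)).symm
  obtain ⟨ρ₁, ρ₂, hρ₁, hρ₂, hne, hs₁, hs₂, he₁, he₂⟩ := hc.exists_isPath_ne ha hb hab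
  have hseq : ∀ ρ : G.Walk a b, ρ.edges ⊆ c.edges →
      etrackSeq T (P₁.append (ρ.append P₃)).edges = etrackSeq T P₁.edges ++ etrackSeq T P₃.edges :=
    fun ρ hρ => by
      rw [Walk.edges_append, Walk.edges_append, etrackSeq_append, etrackSeq_append,
        etrackSeq_eq_nil fun e he => hcT e (hρ he), List.nil_append]
  have := hT _ _ (hP.replace_middle hρ₁ hs₁ h₁ h₃) (hP.replace_middle hρ₂ hs₂ h₁ h₃)
    (by rw [hseq ρ₁ he₁, hseq ρ₂ he₂])
  exact hne (by simpa using congrArg Walk.edges this)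

theorem Reduced.isTrackingEdgeSet_iff_isFES [Fintype V] (hred : Reduced G s t) :
    IsTrackingEdgeSet G s t T ↔ IsFES G T :=
  ⟨hred.isFES_of_isTrackingEdgeSet, IsFES.isTrackingEdgeSet⟩

theorem isFES_edgeSet_sdiff {H : SimpleGraph V} (hHG : H ≤ G) (hH : H.IsAcyclic) :
    IsFES G (G.edgeSet \ H.edgeSet) := by
  rwa [IsFES, deleteEdges_sdiff_eq_of_le hHG]

theorem IsFES.exists_isTree_edgeSet_sdiff_subset (hG : G.Connected) (hT : IsFES G T) :
    ∃ H ≤ G, H.IsTree ∧ G.edgeSet \ H.edgeSet ⊆ T := by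
  obtain ⟨H, hle, hHG, hH⟩ := hG.exists_isTree_le_of_le_of_isAcyclic (G.deleteEdges_le T) hT
  refine ⟨H, hHG, hH, fun e ⟨heG, heH⟩ => by_contra fun heT => heH (edgeSet_mono hle ?_)⟩
  rw [edgeSet_deleteEdges]
  exact ⟨heG, heT⟩

end

section

variable {V : Type} [Finite V] {w : Sym2 V → ℝ} {S S' : Set (Sym2 V)}

theorem eweight_sdiff (h : S ⊆ S') : eweight w (S' \ S) = eweight w S' - eweight w S :=
  eq_sub_of_add_eq' (finsum_mem_add_sdiff h S'.toFinite)

theorem eweight_mono (hw : ∀ e, 0 ≤ w e) (h : S ⊆ S') : eweight w S ≤ eweight w S' := by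
  have hdiff : 0 ≤ eweight w (S' \ S) := finsum_nonneg fun e => finsum_nonneg fun _ => hw e
  linarith [eweight_sdiff (w := w) h]

end

theorem stmt12_general {V : Type} [Fintype V] (G : SimpleGraph V)
    (s t : V) (w : Sym2 V → ℝ) (hw : ∀ e, 0 ≤ w e) (hred : Reduced G s t) :
    (∀ T : Set (Sym2 V), T ⊆ G.edgeSet →
      ((IsTrackingEdgeSet G s t T ∧
          ∀ T' : Set (Sym2 V), T' ⊆ G.edgeSet → IsTrackingEdgeSet G s t T' →
            eweight w T ≤ eweight w T') ↔
        (IsFES G T ∧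
          ∀ T' : Set (Sym2 V), T' ⊆ G.edgeSet → IsFES G T' →
            eweight w T ≤ eweight w T'))) ∧
    (∀ H : SimpleGraph V, H ≤ G → H.IsTree →
      (∀ H' : SimpleGraph V, H' ≤ G → H'.IsTree →
        eweight w H'.edgeSet ≤ eweight w H.edgeSet) →
      IsTrackingEdgeSet G s t (G.edgeSet \ H.edgeSet) ∧
        ∀ T' : Set (Sym2 V), T' ⊆ G.edgeSet → IsTrackingEdgeSet G s t T' →
          eweight w (G.edgeSet \ H.edgeSet) ≤ eweight w T') := by
  have key : ∀ T, IsTrackingEdgeSet G s t T ↔ IsFES G T := fun T =>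
    hred.isTrackingEdgeSet_iff_isFES
  refine ⟨fun T _ => by simp only [key], fun H hHG hH hHmax => ?_⟩
  refine ⟨(key _).mpr (isFES_edgeSet_sdiff hHG hH.isAcyclic), fun T' _ hT' => ?_⟩
  obtain ⟨H', hH'G, hH', hsub⟩ :=
    ((key T').mp hT').exists_isTree_edgeSet_sdiff_subset (hH.connected.mono hHG)
  calc eweight w (G.edgeSet \ H.edgeSet)
      ≤ eweight w (G.edgeSet \ H'.edgeSet) := by
        rw [eweight_sdiff (edgeSet_mono hHG), eweight_sdiff (edgeSet_mono hH'G)]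
        linarith [hHmax H' hH'G hH']
    _ ≤ eweight w T' := eweight_mono hw hsub

theorem stmt12 {V : Type} [Fintype V] (G : SimpleGraph V) (hconn : G.Connected)
    (s t : V) (w : Sym2 V → ℝ) (hw : ∀ e, 0 ≤ w e) (hred : Reduced G s t) :
    (∀ T : Set (Sym2 V), T ⊆ G.edgeSet →
      ((IsTrackingEdgeSet G s t T ∧
          ∀ T' : Set (Sym2 V), T' ⊆ G.edgeSet → IsTrackingEdgeSet G s t T' →
            eweight w T ≤ eweight w T') ↔
        (IsFES G T ∧
          ∀ T' : Set (Sym2 V), T' ⊆ G.edgeSet → IsFES G T' →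
            eweight w T ≤ eweight w T'))) ∧
    (∀ H : SimpleGraph V, H ≤ G → H.IsTree →
      (∀ H' : SimpleGraph V, H' ≤ G → H'.IsTree →
        eweight w H'.edgeSet ≤ eweight w H.edgeSet) →
      IsTrackingEdgeSet G s t (G.edgeSet \ H.edgeSet) ∧
        ∀ T' : Set (Sym2 V), T' ⊆ G.edgeSet → IsTrackingEdgeSet G s t T' →
          eweight w (G.edgeSet \ H.edgeSet) ≤ eweight w T') :=
  stmt12_general G s t w hw hred
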